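/- Let A be an abelian category (in which the Ext-groups Extⁿ are defined), and let Q be an object of A. If the functor Ext¹(Q, −) is right exact, i.e. for every epimorphism f : X → Y in A the induced map Ext¹(Q, X) → Ext¹(Q, Y) is surjective, then Ext²(Q, N) = 0 for every object N of A. -/

import Mathlib

/-!
A class `e ∈ Ext²(Q, N)` is killed by some monomorphism `i : N ⟶ E`. Indeed, write `e` as a
roof `Q ← K → N[2]` of cochain complexes with `K → Q` a quasi-isomorphism. Since `K` is exact
in degree `-2`, the map `coker (d : K⁻³ → K⁻²) → K⁻¹` is mono, and we push `N` out along it.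
After composing with `N ⟶ E`, the degree `-2` part of `K → N[2]` factors through the
differential, so the map is null-homotopic.

Now put `C = coker i`. The long exact sequence gives `e = δ x` for some `x ∈ Ext¹(Q, C)`.
By right exactness `x` lifts to `Ext¹(Q, E)`, and `δ` vanishes on classes that come from
`Ext¹(Q, E)`.
-/

open CategoryTheory Abelian Limits

universe w v u

section

variable {C : Type u} [Category.{v} C] [Abelian C]

lemma CategoryTheory.ShortComplex.Exact.exists_mono_comp_eq_comp {S : ShortComplex C}
    (hS : S.Exact) {Y : C} (u : S.X₂ ⟶ Y) (hu : S.f ≫ u = 0) :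
    ∃ (E : C) (i : Y ⟶ E) (η : S.X₃ ⟶ E), Mono i ∧ u ≫ i = S.g ≫ η := by
  have := hS.mono_fromOpcycles
  refine ⟨pushout (S.descOpcycles u hu) S.fromOpcycles, pushout.inl _ _, pushout.inr _ _,
    mono_pushout_of_mono_g _ _, ?_⟩
  simpa using S.pOpcycles ≫= pushout.condition (f := S.descOpcycles u hu) (g := S.fromOpcycles)

namespace CochainComplex

open HomComplex

noncomputable def homotopyZeroOfFactorsThroughD {K : CochainComplex C ℤ} {p q : ℤ}
    (hpq : p + 1 = q) {X : C} (φ : K ⟶ (singleFunctor C p).obj X) (η : K.X q ⟶ X)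
    (hφ : φ.f p ≫ (HomologicalComplex.singleObjXSelf _ p X).hom = K.d p q ≫ η) :
    Homotopy φ 0 :=
  (Cochain.equivHomotopy φ 0).symm ⟨Cochain.toSingleMk η (show q + (-1) = p by lia), by
    rw [Cochain.ofHom_zero, add_zero, Cochain.δ_toSingleMk _ _ _ p (add_zero p),
      Int.negOnePow_zero, one_smul]
    refine (Cochain.toSingleEquiv (add_zero p)).injective ?_
    rw [Cochain.toSingleEquiv_toSingleMk, ← hφ]
    simp [Cochain.toSingleEquiv]⟩

lemma exists_mono_homotopy_zero_of_exactAt {K : CochainComplex C ℤ} {p : ℤ} (hK : K.ExactAt p)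
    {Y : C} (g : K ⟶ (HomologicalComplex.single C (.up ℤ) p).obj Y) :
    ∃ (E : C) (i : Y ⟶ E), Mono i ∧
      Nonempty (Homotopy (g ≫ (HomologicalComplex.single C (.up ℤ) p).map i) 0) := by
  have hS : (K.sc' (p - 1) p (p + 1)).Exact := (K.exactAt_iff' _ _ _ (by simp) (by simp)).1 hK
  let u := g.f p ≫ (HomologicalComplex.singleObjXSelf _ p Y).hom
  have hu : K.d (p - 1) p ≫ u = 0 := by
    simp only [u, ← g.comm_assoc, HomologicalComplex.single_obj_d, zero_comp, comp_zero]
  obtain ⟨E, i, η, hi, hη⟩ : ∃ (E : C) (i : Y ⟶ E) (η : K.X (p + 1) ⟶ E),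
      Mono i ∧ u ≫ i = K.d p (p + 1) ≫ η :=
    hS.exists_mono_comp_eq_comp u hu
  have hφ : (g ≫ (HomologicalComplex.single C (.up ℤ) p).map i).f p ≫
      (HomologicalComplex.singleObjXSelf _ p E).hom = K.d p (p + 1) ≫ η := by
    simpa [u, HomologicalComplex.single_map_f_self] using hη
  exact ⟨E, i, hi, ⟨homotopyZeroOfFactorsThroughD rfl _ η hφ⟩⟩

end CochainComplex

lemma DerivedCategory.exists_mono_comp_eq_zero_of_exactAt [HasDerivedCategory.{w} C]
    {K : CochainComplex C ℤ} {p : ℤ} (hK : K.ExactAt p) {Y : C}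
    (f : Q.obj K ⟶ (singleFunctor C p).obj Y) :
    ∃ (E : C) (i : Y ⟶ E), Mono i ∧ f ≫ (singleFunctor C p).map i = 0 := by
  obtain ⟨K', s, hs, g, hfg⟩ := right_fac (Y := (HomologicalComplex.single C _ p).obj Y) f
  rw [isIso_Q_map_iff_quasiIso] at hs
  obtain ⟨E, i, hi, ⟨H⟩⟩ := CochainComplex.exists_mono_homotopy_zero_of_exactAt
    ((quasiIsoAt_iff_exactAt' s p hK).1 inferInstance) g
  have hgi : Q.map (g ≫ (HomologicalComplex.single C _ p).map i) = 0 := by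
    rw [Q_map_eq_of_homotopy _ H, Q.map_zero]
  refine ⟨E, i, hi, ?_⟩
  rw [hfg]
  exact (Category.assoc _ _ _).trans
    ((inv (Q.map s) ≫= ((Q.map_comp g _).symm.trans hgi)).trans comp_zero)

namespace CategoryTheory.Abelian.Ext

variable [HasExt.{w} C]

lemma exists_mono_comp_mk₀_eq_zero {X Y : C} {n : ℕ} (e : Ext X Y (n + 1)) :
    ∃ (E : C) (i : Y ⟶ E), Mono i ∧ e.comp (mk₀ i) (add_zero _) = 0 := by
  let := HasDerivedCategory.standard C
  let ι := (DerivedCategory.singleFunctors C).shiftIso ((n + 1 : ℕ) : ℤ) (-(n + 1 : ℕ)) 0 (by lia)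
  obtain ⟨E, i, hi, hf⟩ := DerivedCategory.exists_mono_comp_eq_zero_of_exactAt
    (HomologicalComplex.exactAt_single_obj _ _ _ _ (by lia)) (e.hom ≫ ι.hom.app Y)
  refine ⟨E, i, hi, Ext.ext ?_⟩
  rw [← hom_comp_singleFunctor_map_shift, zero_hom, ← cancel_mono (ι.hom.app E)]
  exact (Category.assoc _ _ _).trans ((e.hom ≫= ι.hom.naturality i).trans
    (((Category.assoc _ _ _).symm.trans hf).trans Limits.zero_comp.symm))

lemma eq_zero_of_forall_epi_surjective_comp_mk₀ (X : C) {n : ℕ}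
    (h : ∀ (Y Z : C) (f : Y ⟶ Z), Epi f →
      Function.Surjective (fun e : Ext X Y n => e.comp (mk₀ f) (add_zero n)))
    {N : C} (e : Ext X N (n + 1)) : e = 0 := by
  obtain ⟨E, i, hi, hei⟩ := exists_mono_comp_mk₀_eq_zero e
  have hS : (ShortComplex.mk i (cokernel.π i) (cokernel.condition i)).ShortExact :=
    { exact := ShortComplex.exact_of_g_is_cokernel _ (cokernelIsCokernel i) }
  obtain ⟨x, rfl⟩ := covariant_sequence_exact₁ X hS e hei rfl
  obtain ⟨y, rfl⟩ := h _ _ _ hS.epi_g x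
  rw [comp_assoc_of_second_deg_zero, hS.comp_extClass, comp_zero]

end CategoryTheory.Abelian.Ext

end

/-- Let `A` be an abelian category (with Ext groups defined). If `Ext¹(Q, -)` is right
exact, i.e. for every epimorphism `f : X ⟶ Y` the induced map
`Ext¹(Q, X) → Ext¹(Q, Y)` is surjective, then `Ext²(Q, N) = 0` for every object `N`. -/
theorem ext_two_vanishes_of_ext_one_right_exact
    {A : Type u} [Category.{v} A] [CategoryTheory.Abelian A] [HasExt.{w} A] (Q : A)
    (h : ∀ (X Y : A) (f : X ⟶ Y), Epi f →
      Function.Surjective (fun e : Ext Q X 1 => e.comp (Ext.mk₀ f) (add_zero 1))) :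
    ∀ N : A, ∀ e : Ext Q N 2, e = 0 :=
  fun _ e => Ext.eq_zero_of_forall_epi_surjective_comp_mk₀ Q h e
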